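/- arXiv:1908.06431 — 4 statements merged into one kernel-verified Lean document; each statement's English description precedes it below -/
import Mathlib

section
/- For every α ∈ (0,1) and all r, r₀ ∈ ℝ, one has c₁·(r−r₀)² ≤ φ_α(r) − φ_α(r₀) − ψ_α(r₀)·(r−r₀) ≤ c₂·(r−r₀)², where c₁ = min{α, 1−α} and c₂ = max{α, 1−α}. -/
/-!
The remainder of the first-order expansion of `φ_α = w · r²` at `r₀`, with weight
`w(r) = |α - 𝟙(r < 0)|`, equals `w(r₀) (r - r₀)² + (w(r) - w(r₀)) r²`.
If `r` and `r₀` lie on the same side of `0` the weights agree; otherwise `r r₀ ≤ 0`, so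
`r² ≤ (r - r₀)²` and the remainder is a convex combination of `w(r₀) (r - r₀)²` and
`w(r) (r - r₀)²`. Either way it lies between `c₁ (r - r₀)²` and `c₂ (r - r₀)²`, since each
weight is `α` or `1 - α`.
-/

open Set

noncomputable section

def expectileWeight (α r : ℝ) : ℝ := |α - if r < 0 then 1 else 0|

def expectileLoss (α r : ℝ) : ℝ := expectileWeight α r * r ^ 2

def expectileScore (α r : ℝ) : ℝ := 2 * expectileWeight α r * r

end

theorem expectileWeight_mem_Icc {α : ℝ} (h0 : 0 ≤ α) (h1 : α ≤ 1) (r : ℝ) :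
    expectileWeight α r ∈ Icc (min α (1 - α)) (max α (1 - α)) := by
  have hw : expectileWeight α r = 1 - α ∨ expectileWeight α r = α := by
    unfold expectileWeight
    split_ifs
    · left; rw [abs_sub_comm, abs_of_nonneg (sub_nonneg.2 h1)]
    · right; rw [sub_zero, abs_of_nonneg h0]
  rcases hw with hw | hw <;> rw [hw]
  · exact ⟨min_le_right _ _, le_max_right _ _⟩
  · exact ⟨min_le_left _ _, le_max_left _ _⟩

theorem expectileWeight_eq_or_mul_nonpos (α r r₀ : ℝ) :
    expectileWeight α r = expectileWeight α r₀ ∨ r * r₀ ≤ 0 := by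
  unfold expectileWeight
  split_ifs with hr hr₀ hr₀
  · exact Or.inl rfl
  · exact Or.inr (mul_nonpos_of_nonpos_of_nonneg hr.le (not_lt.1 hr₀))
  · exact Or.inr (mul_nonpos_of_nonneg_of_nonpos (not_lt.1 hr) hr₀.le)
  · exact Or.inl rfl

theorem expectileLoss_sub_sub_expectileScore_mul (α r r₀ : ℝ) :
    expectileLoss α r - expectileLoss α r₀ - expectileScore α r₀ * (r - r₀) =
      expectileWeight α r₀ * (r - r₀) ^ 2
        + (expectileWeight α r - expectileWeight α r₀) * r ^ 2 := by
  unfold expectileLoss expectileScore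
  ring

theorem sq_le_sub_sq_of_mul_nonpos {r r₀ : ℝ} (h : r * r₀ ≤ 0) : r ^ 2 ≤ (r - r₀) ^ 2 := by
  nlinarith [sq_nonneg r₀]

theorem mul_add_sub_mul_mem_Icc {a b c₁ c₂ q s : ℝ} (ha : a ∈ Icc c₁ c₂) (hb : b ∈ Icc c₁ c₂)
    (hs : 0 ≤ s) (hsq : s ≤ q) : b * q + (a - b) * s ∈ Icc (c₁ * q) (c₂ * q) := by
  have hqs : 0 ≤ q - s := sub_nonneg.2 hsq
  have hcomb : b * q + (a - b) * s = b * (q - s) + a * s := by ring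
  rw [hcomb]
  constructor
  · linarith [mul_le_mul_of_nonneg_right hb.1 hqs, mul_le_mul_of_nonneg_right ha.1 hs]
  · linarith [mul_le_mul_of_nonneg_right hb.2 hqs, mul_le_mul_of_nonneg_right ha.2 hs]

/-- For every α ∈ (0,1) and all r, r₀ ∈ ℝ,
c₁·(r−r₀)² ≤ φ_α(r) − φ_α(r₀) − ψ_α(r₀)·(r−r₀) ≤ c₂·(r−r₀)²,
where φ_α(r) = |α − 𝟙(r<0)|·r², ψ_α(r) = 2|α − 𝟙(r<0)|·r,
c₁ = min{α, 1−α} and c₂ = max{α, 1−α}. -/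
theorem expectile_loss_quadratic_bounds (α : ℝ) (hα : α ∈ Set.Ioo (0 : ℝ) 1) (r r₀ : ℝ) :
    min α (1 - α) * (r - r₀) ^ 2 ≤
        |α - (if r < 0 then (1 : ℝ) else 0)| * r ^ 2
          - |α - (if r₀ < 0 then (1 : ℝ) else 0)| * r₀ ^ 2
          - (2 * |α - (if r₀ < 0 then (1 : ℝ) else 0)| * r₀) * (r - r₀) ∧
      |α - (if r < 0 then (1 : ℝ) else 0)| * r ^ 2
          - |α - (if r₀ < 0 then (1 : ℝ) else 0)| * r₀ ^ 2
          - (2 * |α - (if r₀ < 0 then (1 : ℝ) else 0)| * r₀) * (r - r₀) ≤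
        max α (1 - α) * (r - r₀) ^ 2 := by
  change expectileLoss α r - expectileLoss α r₀ - expectileScore α r₀ * (r - r₀) ∈
    Icc (min α (1 - α) * (r - r₀) ^ 2) (max α (1 - α) * (r - r₀) ^ 2)
  rw [expectileLoss_sub_sub_expectileScore_mul]
  have hw := expectileWeight_mem_Icc hα.1.le hα.2.le
  rcases expectileWeight_eq_or_mul_nonpos α r r₀ with heq | hmul
  · rw [heq, sub_self, zero_mul, add_zero]
    exact ⟨mul_le_mul_of_nonneg_right (hw r₀).1 (sq_nonneg _),
      mul_le_mul_of_nonneg_right (hw r₀).2 (sq_nonneg _)⟩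
  · exact mul_add_sub_mul_mem_Icc (hw r) (hw r₀) (sq_nonneg r) (sq_le_sub_sq_of_mul_nonpos hmul)
end

section
/- Let α ∈ (0,1) and let ε be a real random variable on a probability space with E[ε²] < ∞ and E[ψ_α(ε)] = 0. Then for every t ∈ ℝ, c₁·t² ≤ E[φ_α(ε − t) − φ_α(ε)] ≤ c₂·t², where c₁ = min{α, 1−α} and c₂ = max{α, 1−α}. -/
/-!
Adding `t · E[ψ_α(ε)] = 0` to the excess risk does not change it, and pointwise
`φ_α(r - t) - φ_α(r) + t ψ_α(r) = w(r) (t² - (r - t)²) + w(r - t) (r - t)²`,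
where `w(r) = |α - 𝟙(r < 0)| ∈ [c₁, c₂]`. The two weights differ only when `r` and
`r - t` lie on different sides of `0`, and then `(r - t)² ≤ t²`, so the right-hand side
is a convex combination of `w(r) t²` and `w(r - t) t²`.
-/

open MeasureTheory Set

namespace Expectile

noncomputable section

def weight (α r : ℝ) : ℝ := |α - if r < 0 then 1 else 0|

def loss (α r : ℝ) : ℝ := weight α r * r ^ 2

def score (α r : ℝ) : ℝ := 2 * weight α r * r

variable {α : ℝ}

theorem weight_mem_Icc (hα : α ∈ Ioo 0 1) (r : ℝ) :
    weight α r ∈ Icc (min α (1 - α)) (max α (1 - α)) := by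
  obtain ⟨h0, h1⟩ := hα
  unfold weight
  split_ifs
  · rw [abs_sub_comm, abs_of_pos (sub_pos.2 h1)]
    exact ⟨min_le_right _ _, le_max_right _ _⟩
  · rw [sub_zero, abs_of_pos h0]
    exact ⟨min_le_left _ _, le_max_left _ _⟩

theorem weight_le_one (hα : α ∈ Ioo 0 1) (r : ℝ) : weight α r ≤ 1 :=
  (weight_mem_Icc hα r).2.trans (max_le hα.2.le (by linarith [hα.1]))

theorem weight_nonneg (α r : ℝ) : 0 ≤ weight α r := abs_nonneg _

theorem weight_sub_eq_or_sq_sub_le (α r t : ℝ) :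
    weight α (r - t) = weight α r ∨ (r - t) ^ 2 ≤ t ^ 2 := by
  rcases lt_or_ge r 0 with hr | hr <;> rcases lt_or_ge (r - t) 0 with hrt | hrt
  · simp [weight, hr, hrt]
  · right; nlinarith
  · right; nlinarith
  · simp [weight, hr.not_gt, hrt.not_gt]

@[fun_prop]
theorem measurable_weight (α : ℝ) : Measurable (weight α) :=
  (measurable_const.sub (Measurable.ite measurableSet_Iio measurable_const measurable_const)).abs

theorem measurable_loss (α : ℝ) : Measurable (loss α) := by
  unfold loss
  fun_prop

theorem measurable_score (α : ℝ) : Measurable (score α) := by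
  unfold score
  fun_prop

theorem loss_sub_sub_add_score (α r t : ℝ) :
    loss α (r - t) - loss α r + t * score α r =
      weight α r * (t ^ 2 - (r - t) ^ 2) + weight α (r - t) * (r - t) ^ 2 := by
  unfold loss score
  ring

theorem loss_sub_sub_add_score_mem_Icc (hα : α ∈ Ioo 0 1) (r t : ℝ) :
    loss α (r - t) - loss α r + t * score α r ∈
      Icc (min α (1 - α) * t ^ 2) (max α (1 - α) * t ^ 2) := by
  rw [loss_sub_sub_add_score]
  obtain ⟨hr₁, hr₂⟩ := weight_mem_Icc hα r
  obtain ⟨hrt₁, hrt₂⟩ := weight_mem_Icc hα (r - t)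
  rcases weight_sub_eq_or_sq_sub_le α r t with heq | hle
  · rw [heq, ← mul_add, sub_add_cancel]
    exact ⟨by gcongr, by gcongr⟩
  · have hs := sq_nonneg (r - t)
    constructor <;> linarith [mul_nonneg (sub_nonneg.2 hle) (sub_nonneg.2 hr₁),
      mul_nonneg (sub_nonneg.2 hle) (sub_nonneg.2 hr₂), mul_nonneg hs (sub_nonneg.2 hrt₁),
      mul_nonneg hs (sub_nonneg.2 hrt₂)]

variable {Ω : Type*} [MeasurableSpace Ω] {μ : Measure Ω} {ε : Ω → ℝ}

theorem integrable_loss_comp_sub [IsFiniteMeasure μ] (hα : α ∈ Ioo 0 1) (hε : MemLp ε 2 μ)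
    (t : ℝ) : Integrable (fun ω ↦ loss α (ε ω - t)) μ := by
  have hsq : Integrable (fun ω ↦ (ε ω - t) ^ 2) μ := (hε.sub (memLp_const t)).integrable_sq
  refine hsq.mono' ?_ (ae_of_all _ fun ω ↦ ?_)
  · exact ((measurable_loss α).comp_aemeasurable
      (hε.1.aemeasurable.sub_const t)).aestronglyMeasurable
  · rw [Real.norm_eq_abs, loss, abs_of_nonneg (mul_nonneg (weight_nonneg _ _) (sq_nonneg _))]
    exact mul_le_of_le_one_left (sq_nonneg _) (weight_le_one hα _)

theorem integrable_score_comp (hα : α ∈ Ioo 0 1) (hε : Integrable ε μ) :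
    Integrable (fun ω ↦ score α (ε ω)) μ := by
  refine (hε.norm.const_mul 2).mono' ?_ (ae_of_all _ fun ω ↦ ?_)
  · exact ((measurable_score α).comp_aemeasurable hε.1.aemeasurable).aestronglyMeasurable
  · rw [Real.norm_eq_abs, Real.norm_eq_abs, score, abs_mul, abs_mul, abs_two,
      abs_of_nonneg (weight_nonneg _ _)]
    gcongr
    exact mul_le_of_le_one_right zero_le_two (weight_le_one hα _)

end

end Expectile

open Expectile

/-- Let α ∈ (0,1) and let ε be a real random variable with
E[ε²] < ∞ and E[ψ_α(ε)] = 0. Then for every t ∈ ℝ,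
c₁·t² ≤ E[φ_α(ε − t) − φ_α(ε)] ≤ c₂·t², where c₁ = min{α,1−α},
c₂ = max{α,1−α}, φ_α(r) = |α − 𝟙(r<0)|·r² and ψ_α(r) = 2|α − 𝟙(r<0)|·r. -/
theorem expectile_population_excess_risk_bounds
    {Ω : Type*} [MeasurableSpace Ω] (μ : Measure Ω) [IsProbabilityMeasure μ]
    (α : ℝ) (hα : α ∈ Set.Ioo (0 : ℝ) 1)
    (ε : Ω → ℝ) (hmeas : AEStronglyMeasurable ε μ)
    (hL2 : Integrable (fun ω => (ε ω) ^ 2) μ)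
    (hzero : ∫ ω, 2 * |α - (if ε ω < 0 then (1 : ℝ) else 0)| * ε ω ∂μ = 0)
    (t : ℝ) :
    min α (1 - α) * t ^ 2 ≤
        ∫ ω, (|α - (if ε ω - t < 0 then (1 : ℝ) else 0)| * (ε ω - t) ^ 2
          - |α - (if ε ω < 0 then (1 : ℝ) else 0)| * (ε ω) ^ 2) ∂μ ∧
      ∫ ω, (|α - (if ε ω - t < 0 then (1 : ℝ) else 0)| * (ε ω - t) ^ 2
          - |α - (if ε ω < 0 then (1 : ℝ) else 0)| * (ε ω) ^ 2) ∂μ ≤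
        max α (1 - α) * t ^ 2 := by
  change min α (1 - α) * t ^ 2 ≤ ∫ ω, (loss α (ε ω - t) - loss α (ε ω)) ∂μ ∧
    ∫ ω, (loss α (ε ω - t) - loss α (ε ω)) ∂μ ≤ max α (1 - α) * t ^ 2
  change ∫ ω, score α (ε ω) ∂μ = 0 at hzero
  have hε : MemLp ε 2 μ := (memLp_two_iff_integrable_sq hmeas).2 hL2
  have hloss (s : ℝ) : Integrable (fun ω ↦ loss α (ε ω - s)) μ :=
    integrable_loss_comp_sub hα hε s
  have hexcess : Integrable (fun ω ↦ loss α (ε ω - t) - loss α (ε ω)) μ :=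
    (hloss t).sub (by simpa using hloss 0)
  have hscore := integrable_score_comp hα (hε.integrable one_le_two)
  have hshift : ∫ ω, (loss α (ε ω - t) - loss α (ε ω)) ∂μ =
      ∫ ω, (loss α (ε ω - t) - loss α (ε ω) + t * score α (ε ω)) ∂μ := by
    rw [integral_add hexcess (hscore.const_mul t), integral_const_mul, hzero, mul_zero, add_zero]
  rw [hshift, ← mem_Icc]
  exact (convex_Icc _ _).integral_mem isClosed_Icc
    (ae_of_all _ fun ω ↦ loss_sub_sub_add_score_mem_Icc hα (ε ω) t)
    (hexcess.add (hscore.const_mul t))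
end

section
/- Fix λ > 0 and a > 2, and define H_λ : ℝ → ℝ by H_λ(θ) = ((θ² − 2λ|θ| + λ²)/(2(a−1)))·𝟙(λ ≤ |θ| ≤ aλ) + (λ|θ| − (a+1)λ²/2)·𝟙(|θ| > aλ) (and H_λ(θ) = 0 for |θ| < λ). Then H_λ is convex on ℝ. -/
/-!
With `q x = max (x - λ) 0 ^ 2 - max (x - aλ) 0 ^ 2`, one has
`H_λ t = (q t + q (-t)) / (2 (a - 1))`, since `q` vanishes on `(-∞, λ]`.
The function `q` is differentiable with derivative `2 (max (x - λ) 0 - max (x - aλ) 0)`,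
a clamped ramp, which is monotone because `λ ≤ aλ`; so `q` is convex, and hence so is `H_λ`.
-/

open Set

theorem hasDerivAt_max_sub_sq (c x : ℝ) :
    HasDerivAt (fun y : ℝ => max (y - c) 0 ^ 2) (2 * max (x - c) 0) x := by
  refine hasDerivAt_of_hasDerivAt_of_ne' (f := fun y => max (y - c) 0 ^ 2)
    (g := fun y => 2 * max (y - c) 0) (x := c) (fun y hy => ?_) (by fun_prop) (by fun_prop) x
  rcases hy.lt_or_gt with hy | hy
  · have hzero : (fun z : ℝ => max (z - c) 0 ^ 2) =ᶠ[nhds y] fun _ => 0 := by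
      filter_upwards [eventually_lt_nhds hy] with z hz
      simp [max_eq_right (sub_nonpos.2 hz.le)]
    simpa [max_eq_right (sub_nonpos.2 hy.le)] using
      (hasDerivAt_const y (0 : ℝ)).congr_of_eventuallyEq hzero
  · have hsq : (fun z : ℝ => max (z - c) 0 ^ 2) =ᶠ[nhds y] fun z => (z - c) ^ 2 := by
      filter_upwards [eventually_gt_nhds hy] with z hz
      rw [max_eq_left (sub_nonneg.2 hz.le)]
    simpa [max_eq_left (sub_nonneg.2 hy.le)] using
      (((hasDerivAt_id y).sub_const c).pow 2).congr_of_eventuallyEq hsq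

theorem monotone_max_sub_sub_max_sub {c d : ℝ} (hcd : c ≤ d) :
    Monotone fun x : ℝ => max (x - c) 0 - max (x - d) 0 := by
  intro x y hxy
  simp only [max_def]
  split_ifs <;> linarith

theorem convexOn_univ_max_sub_sq_sub_max_sub_sq {c d : ℝ} (hcd : c ≤ d) :
    ConvexOn ℝ univ fun x : ℝ => max (x - c) 0 ^ 2 - max (x - d) 0 ^ 2 := by
  have hderiv (x : ℝ) : HasDerivAt (fun x : ℝ => max (x - c) 0 ^ 2 - max (x - d) 0 ^ 2)
      (2 * max (x - c) 0 - 2 * max (x - d) 0) x :=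
    (hasDerivAt_max_sub_sq c x).sub (hasDerivAt_max_sub_sq d x)
  refine Monotone.convexOn_univ_of_deriv (fun x => (hderiv x).differentiableAt) ?_
  rw [funext fun x => (hderiv x).deriv]
  simpa only [← mul_sub] using (monotone_max_sub_sub_max_sub hcd).const_mul zero_le_two

theorem apply_abs_eq_add_apply_neg {f : ℝ → ℝ} (hf : ∀ x ≤ 0, f x = 0) (t : ℝ) :
    f |t| = f t + f (-t) := by
  rcases le_total 0 t with ht | ht
  · rw [abs_of_nonneg ht, hf (-t) (neg_nonpos.2 ht), add_zero]
  · rw [abs_of_nonpos ht, hf t ht, zero_add]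

theorem scad_concave_part_eq_max_sub_sq {lam a : ℝ} (hlam : 0 ≤ lam) (ha : 1 < a) (s : ℝ) :
    ((if lam ≤ s ∧ s ≤ a * lam then (s ^ 2 - 2 * lam * s + lam ^ 2) / (2 * (a - 1)) else 0)
        + (if a * lam < s then lam * s - (a + 1) * lam ^ 2 / 2 else 0))
      = (max (s - lam) 0 ^ 2 - max (s - a * lam) 0 ^ 2) / (2 * (a - 1)) := by
  have hlam_le : lam ≤ a * lam := by nlinarith
  have ha' : 2 * (a - 1) ≠ 0 := by linarith
  rcases lt_or_ge s lam with h₁ | h₁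
  · rw [if_neg (by rintro ⟨h, -⟩; linarith), if_neg (by linarith),
      max_eq_right (by linarith), max_eq_right (by linarith)]
    simp
  rcases le_or_gt s (a * lam) with h₂ | h₂
  · rw [if_pos ⟨h₁, h₂⟩, if_neg h₂.not_gt, max_eq_left (by linarith), max_eq_right (by linarith)]
    ring
  · rw [if_neg (by rintro ⟨-, h⟩; linarith), if_pos h₂, max_eq_left (by linarith),
      max_eq_left (by linarith), eq_div_iff ha']
    ring

/-- For λ > 0 and a > 2, the SCAD concave-part function
H_λ(θ) = ((θ² − 2λ|θ| + λ²)/(2(a−1)))·𝟙(λ ≤ |θ| ≤ aλ)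
        + (λ|θ| − (a+1)λ²/2)·𝟙(|θ| > aλ)
is convex on ℝ. -/
theorem scad_concave_part_convex (lam a : ℝ) (hlam : 0 < lam) (ha : 2 < a) :
    ConvexOn ℝ Set.univ
      (fun t : ℝ =>
        (if lam ≤ |t| ∧ |t| ≤ a * lam then (t ^ 2 - 2 * lam * |t| + lam ^ 2) / (2 * (a - 1))
          else 0)
        + (if a * lam < |t| then lam * |t| - (a + 1) * lam ^ 2 / 2 else 0)) := by
  have hlam_le : lam ≤ a * lam := by nlinarith
  set q : ℝ → ℝ := fun x => max (x - lam) 0 ^ 2 - max (x - a * lam) 0 ^ 2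
  have hq : ConvexOn ℝ univ q := convexOn_univ_max_sub_sq_sub_max_sub_sq hlam_le
  have hq_neg : ConvexOn ℝ univ fun x => q (-x) := by
    simpa [Function.comp_def] using hq.comp_linearMap (-LinearMap.id)
  have hq_zero (x : ℝ) (hx : x ≤ 0) : q x = 0 := by
    simp [q, max_eq_right (by linarith : x - lam ≤ 0), max_eq_right (by linarith : x - a * lam ≤ 0)]
  refine ((hq.add hq_neg).smul (inv_nonneg.2 (by linarith : (0 : ℝ) ≤ 2 * (a - 1)))).congr
    fun t _ => ?_
  show (2 * (a - 1))⁻¹ * (q t + q (-t)) = _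
  rw [← apply_abs_eq_add_apply_neg hq_zero, inv_mul_eq_div, ← sq_abs t,
    scad_concave_part_eq_max_sub_sq hlam.le (by linarith)]
end

section
/- Let E be a real inner product space, let k, l : E → ℝ be convex functions, and set L = k − l. Suppose θ* ∈ E has a neighborhood U such that for every θ ∈ U there exists a vector v ∈ E that is simultaneously a subgradient of l at θ and a subgradient of k at θ* (i.e., ∂l(θ) ∩ ∂k(θ*) ≠ ∅ for all θ ∈ U). Then θ* is a local minimizer of L. -/
open scoped RealInnerProductSpace

theorem sub_le_sub_of_common_subgradient {E : Type*} [SeminormedAddCommGroup E]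
    [InnerProductSpace ℝ E] {k l : E → ℝ} {θ θs v : E}
    (hl : ∀ θ' : E, l θ' ≥ l θ + ⟪v, θ' - θ⟫) (hk : ∀ θ' : E, k θ' ≥ k θs + ⟪v, θ' - θs⟫) :
    k θs - l θs ≤ k θ - l θ := by
  have h_cancel : ⟪v, θs - θ⟫ = -⟪v, θ - θs⟫ := by rw [← inner_neg_right, neg_sub]
  linarith [hl θs, hk θ]

theorem dc_local_minimizer_sufficient_condition_general
    {E : Type*} [NormedAddCommGroup E] [InnerProductSpace ℝ E]
    (k l : E → ℝ)
    (θs : E) (U : Set E) (hU : U ∈ nhds θs)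
    (hsub : ∀ θ ∈ U, ∃ v : E,
      (∀ θ' : E, l θ' ≥ l θ + (inner ℝ v (θ' - θ) : ℝ)) ∧
      (∀ θ' : E, k θ' ≥ k θs + (inner ℝ v (θ' - θs) : ℝ))) :
    IsLocalMin (fun θ => k θ - l θ) θs := by
  filter_upwards [hU] with θ hθ
  obtain ⟨v, hlv, hkv⟩ := hsub θ hθ
  exact sub_le_sub_of_common_subgradient hlv hkv

/-- Tao–An sufficient condition for a local minimizer of a DC
function: Let E be a real inner product space, k, l : E → ℝ convex, and
L = k − l. If θ* has a neighborhood U such that for every θ ∈ U there is a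
vector v that is simultaneously a subgradient of l at θ and a subgradient of
k at θ*, then θ* is a local minimizer of L. -/
theorem dc_local_minimizer_sufficient_condition
    {E : Type*} [NormedAddCommGroup E] [InnerProductSpace ℝ E]
    (k l : E → ℝ) (hk : ConvexOn ℝ Set.univ k) (hl : ConvexOn ℝ Set.univ l)
    (θs : E) (U : Set E) (hU : U ∈ nhds θs)
    (hsub : ∀ θ ∈ U, ∃ v : E,
      (∀ θ' : E, l θ' ≥ l θ + (inner ℝ v (θ' - θ) : ℝ)) ∧
      (∀ θ' : E, k θ' ≥ k θs + (inner ℝ v (θ' - θs) : ℝ))) :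
    IsLocalMin (fun θ => k θ - l θ) θs :=
  dc_local_minimizer_sufficient_condition_general k l θs U hU hsub
end
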